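/- arXiv:2504.00494 — 2 statements merged into one kernel-verified Lean document; each statement's English description precedes it below -/
import Mathlib

section
/- The SE(2) exponential given by exp(c¹,c²,c³) = (sinc(c³/2)(c¹ cos(c³/2) - c² sin(c³/2)), sinc(c³/2)(c¹ sin(c³/2) + c² cos(c³/2)), c³ mod 2π) is surjective onto SE(2) ≅ ℝ² × (ℝ/2πℤ). -/
open Real

/-- `sinc x = sin x / x`, with `sinc 0 = 1`. -/
noncomputable def sinc (x : ℝ) : ℝ := if x = 0 then 1 else Real.sin x / x

/-- The SE(2) exponential `𝔰𝔢(2) ≅ ℝ³ → SE(2) ≅ ℝ² × (ℝ/2πℤ)`, with the angular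
component `c³` taken mod `2π`. -/
noncomputable def se2ExpAngle (c : ℝ × ℝ × ℝ) : (ℝ × ℝ) × Real.Angle :=
  ((_root_.sinc (c.2.2 / 2) * (c.1 * Real.cos (c.2.2 / 2) - c.2.1 * Real.sin (c.2.2 / 2)),
    _root_.sinc (c.2.2 / 2) * (c.1 * Real.sin (c.2.2 / 2) + c.2.1 * Real.cos (c.2.2 / 2))),
   (c.2.2 : Real.Angle))

/-! Represent the angle by `θ ∈ (-π, π]`. Then `sinc (θ / 2) ≠ 0`, so the translation part
`sinc (θ / 2) • R_{θ/2} (c¹, c²)` of the exponential is an invertible linear map of `(c¹, c²)`. -/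

lemma sinc_ne_zero_of_lt_of_lt {x : ℝ} (h₁ : -π < x) (h₂ : x < π) : _root_.sinc x ≠ 0 := by
  unfold _root_.sinc
  split_ifs with hx
  · exact one_ne_zero
  · exact div_ne_zero (fun h ↦ hx ((sin_eq_zero_iff_of_lt_of_lt h₁ h₂).mp h)) hx

lemma exists_smul_rotation_eq (α : ℝ) {s : ℝ} (hs : s ≠ 0) (a b : ℝ) :
    ∃ x y : ℝ, s * (x * cos α - y * sin α) = a ∧ s * (x * sin α + y * cos α) = b := by
  -- apply the inverse rotation `R_{-α}` and divide by `s`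
  refine ⟨(a * cos α + b * sin α) / s, (-a * sin α + b * cos α) / s, ?_, ?_⟩
  · field_simp
    linear_combination a * sin_sq_add_cos_sq α
  · field_simp
    linear_combination b * sin_sq_add_cos_sq α

/-- The SE(2) exponential is surjective onto `SE(2) ≅ ℝ² × (ℝ/2πℤ)`. -/
theorem se2_exp_surjective : Function.Surjective se2ExpAngle := by
  rintro ⟨⟨a, b⟩, θ⟩
  have hs : _root_.sinc (θ.toReal / 2) ≠ 0 :=
    sinc_ne_zero_of_lt_of_lt (by linarith [θ.neg_pi_lt_toReal, pi_pos])
      (by linarith [θ.toReal_le_pi, pi_pos])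
  obtain ⟨x, y, hx, hy⟩ := exists_smul_rotation_eq (θ.toReal / 2) hs a b
  exact ⟨(x, y, θ.toReal), by simp only [se2ExpAngle, hx, hy, θ.coe_toReal]⟩
end

section
/- For R ∈ SO(3) with tr(R) > -1 and R ≠ I, setting q = arccos((tr(R) - 1)/2), the matrix A = (q / (2 sin q)) (R - Rᵀ) is skew-symmetric and satisfies exp(A) = R, where exp is the matrix exponential. Equivalently, with the paper's convention log(R) = (R - Rᵀ)/(2 sinc(q)), one has exp(log R) = R. -/
open Real Matrix

attribute [local instance] Matrix.linftyOpNormedRing Matrix.linftyOpNormedAlgebra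

private lemma rodrigues_adjugate_poly (A : Matrix (Fin 3) (Fin 3) ℝ) :
    A.adjugate = (((A.trace)^2 - (A*A).trace)/2) • (1 : Matrix (Fin 3) (Fin 3) ℝ)
      - A.trace • A + A*A := by
  ext i j
  fin_cases i <;> fin_cases j <;>
    simp [Matrix.adjugate_fin_three, Matrix.trace_fin_three, Matrix.mul_apply,
      Fin.sum_univ_three, Matrix.one_apply] <;> ring

private lemma rodrigues_trace_lt (R : Matrix (Fin 3) (Fin 3) ℝ)
    (horth : Rᵀ * R = 1) (hne : R ≠ 1) : R.trace < 3 := by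
  have hcol : ∀ j, R 0 j * R 0 j + R 1 j * R 1 j + R 2 j * R 2 j = 1 := by
    intro j
    have h := congrFun (congrFun horth j) j
    simpa [Matrix.mul_apply, Fin.sum_univ_three, Matrix.one_apply] using h
  have h0 := hcol 0; have h1 := hcol 1; have h2 := hcol 2
  rw [Matrix.trace_fin_three]
  by_contra hle
  push_neg at hle
  have le0 : R 0 0 ≤ 1 := by nlinarith [mul_self_nonneg (R 1 0), mul_self_nonneg (R 2 0), sq_nonneg (R 0 0 - 1)]
  have le1 : R 1 1 ≤ 1 := by nlinarith [mul_self_nonneg (R 0 1), mul_self_nonneg (R 2 1), sq_nonneg (R 1 1 - 1)]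
  have le2 : R 2 2 ≤ 1 := by nlinarith [mul_self_nonneg (R 0 2), mul_self_nonneg (R 1 2), sq_nonneg (R 2 2 - 1)]
  have e0 : R 0 0 = 1 := by linarith
  have e1 : R 1 1 = 1 := by linarith
  have e2 : R 2 2 = 1 := by linarith
  rw [e0] at h0; rw [e1] at h1; rw [e2] at h2
  have z10 : R 1 0 = 0 := mul_self_eq_zero.mp (by linarith [mul_self_nonneg (R 2 0), mul_self_nonneg (R 0 0), mul_self_nonneg (R 1 0), mul_self_nonneg (R 2 0), mul_self_nonneg (R 0 1), mul_self_nonneg (R 2 1), mul_self_nonneg (R 0 2), mul_self_nonneg (R 1 2)])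
  have z20 : R 2 0 = 0 := mul_self_eq_zero.mp (by linarith [mul_self_nonneg (R 1 0), mul_self_nonneg (R 0 0), mul_self_nonneg (R 1 0), mul_self_nonneg (R 2 0), mul_self_nonneg (R 0 1), mul_self_nonneg (R 2 1), mul_self_nonneg (R 0 2), mul_self_nonneg (R 1 2)])
  have z01 : R 0 1 = 0 := mul_self_eq_zero.mp (by linarith [mul_self_nonneg (R 2 1), mul_self_nonneg (R 0 0), mul_self_nonneg (R 1 0), mul_self_nonneg (R 2 0), mul_self_nonneg (R 0 1), mul_self_nonneg (R 2 1), mul_self_nonneg (R 0 2), mul_self_nonneg (R 1 2)])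
  have z21 : R 2 1 = 0 := mul_self_eq_zero.mp (by linarith [mul_self_nonneg (R 0 1), mul_self_nonneg (R 0 0), mul_self_nonneg (R 1 0), mul_self_nonneg (R 2 0), mul_self_nonneg (R 0 1), mul_self_nonneg (R 2 1), mul_self_nonneg (R 0 2), mul_self_nonneg (R 1 2)])
  have z02 : R 0 2 = 0 := mul_self_eq_zero.mp (by linarith [mul_self_nonneg (R 1 2), mul_self_nonneg (R 0 0), mul_self_nonneg (R 1 0), mul_self_nonneg (R 2 0), mul_self_nonneg (R 0 1), mul_self_nonneg (R 2 1), mul_self_nonneg (R 0 2), mul_self_nonneg (R 1 2)])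
  have z12 : R 1 2 = 0 := mul_self_eq_zero.mp (by linarith [mul_self_nonneg (R 0 2), mul_self_nonneg (R 0 0), mul_self_nonneg (R 1 0), mul_self_nonneg (R 2 0), mul_self_nonneg (R 0 1), mul_self_nonneg (R 2 1), mul_self_nonneg (R 0 2), mul_self_nonneg (R 1 2)])
  apply hne
  ext i j
  fin_cases i <;> fin_cases j <;>
    simp_all [Matrix.one_apply]

private lemma rodrigues_exp_aux (N : Matrix (Fin 3) (Fin 3) ℝ) (q : ℝ)
    (hN3 : N * N * N = -N) :
    NormedSpace.exp (q • N)
      = 1 + Real.sin q • N + (1 - Real.cos q) • (N * N) := by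
  have hpow : ∀ k : ℕ, N ^ (2*k+1) = ((-1 : ℝ)^k) • N ∧ N ^ (2*k+2) = ((-1 : ℝ)^k) • (N * N) := by
    intro k
    induction k with
    | zero => simp [pow_succ]
    | succ k ih =>
      obtain ⟨ih1, ih2⟩ := ih
      have e1 : N ^ (2*(k+1)+1) = N ^ (2*k+2) * N := by
        rw [show 2*(k+1)+1 = (2*k+2)+1 by ring, pow_succ]
      have e2 : N ^ (2*(k+1)+2) = N ^ (2*(k+1)+1) * N := by
        rw [show 2*(k+1)+2 = (2*(k+1)+1)+1 by ring, pow_succ]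
      have c1 : N ^ (2*(k+1)+1) = ((-1 : ℝ)^(k+1)) • N := by
        rw [e1, ih2, smul_mul_assoc, hN3, pow_succ]
        rw [smul_neg]
        rw [show ((-1:ℝ)^k * -1) = -((-1:ℝ)^k) by ring, neg_smul]
      refine ⟨c1, ?_⟩
      rw [e2, c1, smul_mul_assoc]
  classical
  set a : ℕ → ℝ := fun n => if n = 0 then 1 else 0 with ha
  set b : ℕ → ℝ := fun n => if n % 2 = 1 then (-1:ℝ)^(n/2) * q^n / (Nat.factorial n) else 0 with hb
  set cc : ℕ → ℝ := fun n => if n % 2 = 0 ∧ n ≠ 0 then (-1:ℝ)^(n/2 - 1) * q^n / (Nat.factorial n) else 0 with hcc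
  have key : ∀ n : ℕ, ((Nat.factorial n : ℝ))⁻¹ • (q • N) ^ n
      = a n • (1 : Matrix (Fin 3) (Fin 3) ℝ) + b n • N + cc n • (N * N) := by
    intro n
    rcases Nat.even_or_odd n with ⟨k, hk⟩ | ⟨k, hk⟩
    · rcases Nat.eq_zero_or_pos k with rfl | hkpos
      · subst hk; simp [ha, hb, hcc]
      · obtain ⟨j, rfl⟩ : ∃ j, k = j + 1 := ⟨k-1, by omega⟩
        have hn : n = 2*j+2 := by omega
        subst hn
        have ea : a (2*j+2) = 0 := by simp only [ha]; exact if_neg (by omega)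
        have eb : b (2*j+2) = 0 := by simp only [hb]; exact if_neg (by omega)
        have ec : cc (2*j+2) = (-1:ℝ)^j * q^(2*j+2) / (Nat.factorial (2*j+2)) := by
          simp only [hcc]
          rw [if_pos ⟨by omega, by omega⟩, show (2*j+2)/2 - 1 = j from by omega]
        rw [ea, eb, ec, smul_pow, (hpow j).2, zero_smul, zero_smul, zero_add, zero_add,
          smul_smul, smul_smul]
        congr 1
        ring
    · have hn : n = 2*k+1 := by omega
      subst hn
      have ea : a (2*k+1) = 0 := by simp only [ha]; exact if_neg (by omega)
      have eb : b (2*k+1) = (-1:ℝ)^k * q^(2*k+1) / (Nat.factorial (2*k+1)) := by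
        simp only [hb]
        rw [if_pos (by omega), show (2*k+1)/2 = k from by omega]
      have ec : cc (2*k+1) = 0 := by simp only [hcc]; exact if_neg (by omega)
      rw [ea, eb, ec, smul_pow, (hpow k).1, zero_smul, zero_smul, zero_add, add_zero,
        smul_smul, smul_smul]
      congr 1
      ring
  have hsa : Summable a := by
    rw [ha]; exact ⟨_, hasSum_ite_eq 0 1⟩
  have hsb : Summable b := by
    apply Summable.of_norm_bounded (Real.summable_pow_div_factorial |q|)
    intro n
    rw [hb]
    dsimp only
    split
    · rw [Real.norm_eq_abs, abs_div, abs_mul, abs_pow, abs_pow, abs_neg, abs_one, one_pow,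
        one_mul, Nat.abs_cast]
    · simp
      positivity
  have hsc : Summable cc := by
    apply Summable.of_norm_bounded (Real.summable_pow_div_factorial |q|)
    intro n
    rw [hcc]
    dsimp only
    split
    · rw [Real.norm_eq_abs, abs_div, abs_mul, abs_pow, abs_pow, abs_neg, abs_one, one_pow,
        one_mul, Nat.abs_cast]
    · simp
      positivity
  have Sa : ∑' n, a n = 1 := by rw [ha]; exact tsum_ite_eq 0 1
  have Sb : HasSum b (Real.sin q) := by
    have hinj : Function.Injective (fun k : ℕ => 2*k+1) := fun x y h => by
      simp only at h; omega
    have h0 : ∀ n ∉ Set.range (fun k : ℕ => 2*k+1), b n = 0 := by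
      intro n hn
      rw [hb]
      refine if_neg fun hmod => hn ⟨n/2, show 2*(n/2)+1 = n by omega⟩
    refine (hinj.hasSum_iff h0).mp ?_
    have : (b ∘ fun k : ℕ => 2*k+1) = fun k : ℕ => (-1:ℝ)^k * q^(2*k+1) / (Nat.factorial (2*k+1)) := by
      funext k
      simp only [Function.comp, hb]
      rw [if_pos (by omega), show (2*k+1)/2 = k from by omega]
    rw [this]
    exact Real.hasSum_sin q
  have Sc : HasSum cc (1 - Real.cos q) := by
    have h1 : HasSum (fun n : ℕ => (-1:ℝ)^(n+1) * q^(2*(n+1))/ (Nat.factorial (2*(n+1)))) (Real.cos q - 1) :=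
      (hasSum_nat_add_iff (f := fun n : ℕ => (-1:ℝ)^n * q^(2*n)/(Nat.factorial (2*n))) 1).mpr
        (by simpa using Real.hasSum_cos q)
    have hinj : Function.Injective (fun k : ℕ => 2*k+2) := fun x y h => by
      simp only at h; omega
    have h0 : ∀ n ∉ Set.range (fun k : ℕ => 2*k+2), cc n = 0 := by
      intro n hn
      rw [hcc]
      refine if_neg fun hmod => hn ⟨n/2 - 1, show 2*(n/2-1)+2 = n by omega⟩
    refine (hinj.hasSum_iff h0).mp ?_
    have : (cc ∘ fun k : ℕ => 2*k+2) = fun n : ℕ => -((-1:ℝ)^(n+1) * q^(2*(n+1))/ (Nat.factorial (2*(n+1)))) := by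
      funext k
      simp only [Function.comp, hcc]
      rw [if_pos ⟨by omega, by omega⟩, show (2*k+2)/2 - 1 = k from by omega,
        show 2*(k+1) = 2*k+2 from by ring, pow_succ]
      ring
    rw [this]
    simpa [neg_sub] using h1.neg
  rw [NormedSpace.exp_eq_tsum ℝ]
  beta_reduce
  rw [tsum_congr key,
    Summable.tsum_add (Summable.add (hsa.smul_const _) (hsb.smul_const _)) (hsc.smul_const _),
    Summable.tsum_add (hsa.smul_const _) (hsb.smul_const _),
    Summable.tsum_smul_const hsa, Summable.tsum_smul_const hsb, Summable.tsum_smul_const hsc,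
    Sa, Sb.tsum_eq, Sc.tsum_eq, one_smul]


/-- **Rodrigues' logarithm.**  For `R ∈ SO(3)` with `tr R > -1` and `R ≠ I`, setting
`q = arccos ((tr R - 1)/2)`, the matrix `A = log R = (R - Rᵀ)/(2 sinc q)`
(equivalently `A = (q / (2 sin q)) (R - Rᵀ)`) is skew-symmetric and satisfies
`exp A = R`, where `exp` is the matrix exponential. -/
theorem so3_exp_log (R : Matrix (Fin 3) (Fin 3) ℝ)
    (horth : Rᵀ * R = 1) (hdet : R.det = 1)
    (htr : R.trace > -1) (hne : R ≠ 1)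
    (q : ℝ) (hq : q = Real.arccos ((R.trace - 1) / 2))
    (A : Matrix (Fin 3) (Fin 3) ℝ)
    (hA : A = (_root_.sinc q)⁻¹ • ((2:ℝ)⁻¹ • (R - Rᵀ))) :
    Aᵀ = -A ∧ A = (q / (2 * Real.sin q)) • (R - Rᵀ) ∧ NormedSpace.exp A = R := by

  have hRRt : R * Rᵀ = 1 := mul_eq_one_comm.mpr horth
  have hadj : R.adjugate = Rᵀ := by
    calc R.adjugate = (Rᵀ * R) * R.adjugate := by rw [horth, one_mul]
    _ = Rᵀ * (R * R.adjugate) := by rw [Matrix.mul_assoc]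
    _ = Rᵀ := by rw [Matrix.mul_adjugate, hdet, one_smul, mul_one]
  have hT : Rᵀ = R.trace • (1 : Matrix (Fin 3) (Fin 3) ℝ) - R.trace • R + R * R := by
    have h1 := (rodrigues_adjugate_poly R).symm.trans hadj
    have h2 := congrArg Matrix.trace h1
    simp [Matrix.trace_smul, Matrix.trace_one, Matrix.trace_sub, Matrix.trace_add,
      Matrix.trace_transpose] at h2
    have hc : ((R.trace)^2 - (R*R).trace)/2 = R.trace := by linarith
    rw [← h1, hc]
  set t := R.trace with htdef
  have htlt : t < 3 := rodrigues_trace_lt R horth hne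
  have htgt : -1 < t := htr
  -- trigonometry
  set c : ℝ := (t - 1)/2 with hcdef
  have hc1 : -1 < c := by rw [hcdef]; linarith
  have hc2 : c < 1 := by rw [hcdef]; linarith
  have hcos : Real.cos q = c := by rw [hq]; exact Real.cos_arccos (by linarith) (by linarith)
  have hq0 : 0 < q := by rw [hq]; exact Real.arccos_pos.mpr hc2
  have hqpi : q < Real.pi := by
    rw [hq]
    rcases lt_or_eq_of_le (Real.arccos_le_pi c) with h | h
    · exact h
    · exact absurd (Real.arccos_eq_pi.mp h) (by linarith)
  set s : ℝ := Real.sin q with hsdef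
  have hsin : 0 < s := Real.sin_pos_of_pos_of_lt_pi hq0 hqpi
  have hsne : s ≠ 0 := ne_of_gt hsin
  have hqne : q ≠ 0 := ne_of_gt hq0
  have hs2 : s^2 = 1 - c^2 := by rw [hsdef, Real.sin_sq, hcos]
  have hsinc : _root_.sinc q = s / q := if_neg hqne
  -- matrix algebra
  have hTt : R = t • (1 : Matrix (Fin 3) (Fin 3) ℝ) - t • Rᵀ + Rᵀ * Rᵀ := by
    have h := congrArg Matrix.transpose hT
    simpa [Matrix.transpose_add, Matrix.transpose_sub, Matrix.transpose_smul,
      Matrix.transpose_one, Matrix.transpose_mul] using h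
  have hR2 : R * R = Rᵀ + t • R - t • (1 : Matrix (Fin 3) (Fin 3) ℝ) := by rw [hT]; abel
  have hRt2 : Rᵀ * Rᵀ = R + t • Rᵀ - t • (1 : Matrix (Fin 3) (Fin 3) ℝ) := by
    calc Rᵀ * Rᵀ = (t • (1 : Matrix (Fin 3) (Fin 3) ℝ) - t • Rᵀ + Rᵀ * Rᵀ) + t • Rᵀ - t • 1 := by
          abel
    _ = R + t • Rᵀ - t • 1 := by rw [← hTt]
  set S : Matrix (Fin 3) (Fin 3) ℝ := R - Rᵀ with hS
  have hS2 : S * S = (1+t) • (R + Rᵀ) - (2*(1+t)) • (1 : Matrix (Fin 3) (Fin 3) ℝ) := by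
    have expand : S * S = R*R + Rᵀ*Rᵀ - (R*Rᵀ + Rᵀ*R) := by rw [hS]; noncomm_ring
    rw [expand, hR2, hRt2, horth, hRRt]
    module
  have hS3 : S * S * S = (t^2 - 2*t - 3) • S := by
    have e1 : (R + Rᵀ) * S = R*R - Rᵀ*Rᵀ + (Rᵀ*R - R*Rᵀ) := by rw [hS]; noncomm_ring
    rw [horth, hRRt, sub_self, add_zero, hR2, hRt2] at e1
    rw [hS2, sub_mul, smul_mul_assoc, smul_mul_assoc, one_mul, e1, hS]
    module
  have ht' : t = 2*c + 1 := by rw [hcdef]; ring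
  set N : Matrix (Fin 3) (Fin 3) ℝ := (2*s)⁻¹ • S with hN
  have hN3 : N * N * N = -N := by
    simp only [hN, smul_mul_assoc, mul_smul_comm, smul_smul]
    rw [hS3, smul_smul]
    rw [show (2*s)⁻¹ * ((2*s)⁻¹ * (2*s)⁻¹) * (t^2 - 2*t - 3) = -(2*s)⁻¹ by
      rw [ht']; field_simp; linear_combination 4 * hs2]
    rw [neg_smul]
  have hNsq : N * N = ((2*s)⁻¹ * (2*s)⁻¹) • (S * S) := by
    rw [hN, smul_mul_assoc, mul_smul_comm, smul_smul]
  have h1 : s • N = (2:ℝ)⁻¹ • S := by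
    rw [hN, smul_smul]
    congr 1
    field_simp
  have h2 : (1 - c) • (N * N) = (2:ℝ)⁻¹ • (R + Rᵀ) - 1 := by
    rw [hNsq, smul_smul, hS2, smul_sub, smul_smul, smul_smul]
    have e1 : (1-c) * ((2*s)⁻¹ * (2*s)⁻¹) * (1+t) = 2⁻¹ := by
      rw [ht']; field_simp; linear_combination (-2) * hs2
    have e2 : (1-c) * ((2*s)⁻¹ * (2*s)⁻¹) * (2*(1+t)) = 1 := by
      rw [ht']; field_simp; linear_combination (-2) * hs2
    rw [e1, e2, one_smul]
  have hRod : (1 : Matrix (Fin 3) (Fin 3) ℝ) + s • N + (1 - c) • (N * N) = R := by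
    rw [h1, h2, hS]
    module
  have hAN : A = q • N := by
    rw [hA, hN, smul_smul, smul_smul]
    congr 1
    rw [hsinc]
    field_simp
  refine ⟨?_, ?_, ?_⟩
  · have hTS : Sᵀ = -S := by
      rw [hS, Matrix.transpose_sub, Matrix.transpose_transpose, neg_sub]
    rw [hA, Matrix.transpose_smul, Matrix.transpose_smul, hTS, smul_neg, smul_neg]
  · rw [hA, smul_smul]
    congr 1
    rw [hsinc]
    field_simp
  · rw [hAN, rodrigues_exp_aux N q hN3, ← hsdef, hcos]
    exact hRod
end
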